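/- For γ > 1 let ω(k) = k·√(γ + 1/(1+k²)) and fix j ∈ {−1,1}. Then for every M > 0 there exists C > 0 such that for all k, ℓ with |k − ℓ| ≤ M and |k| ≥ 2M+1, the denominator satisfies |j(ω(k) − ω(ℓ)) + ω(k−ℓ)| = |√γ·j·(k−ℓ) + ω(k−ℓ)| + error, with error bounded by C·|k|⁻¹; moreover √γ·j·m + ω(m) = 0 only at m = 0 and |√γ·j·m + ω(m)| ≥ c·|m| for |m| ≤ M with c > 0. -/

import Mathlib

/-!
Write `ω(k) = k √(γ + 1/(1+k²))`. Since `√(γ + ε) - √γ ≤ ε / (2√γ)`, the dispersion relation is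
linear up to `|ω(k) - √γ k| ≤ 1 / (2√γ |k|)`; for `|k - ℓ| ≤ M ≤ |k|/2` also `|ℓ| ≥ |k|/2`, so replacing
`ω(k) - ω(ℓ)` by `√γ (k - ℓ)` costs `O(1/|k|)`. The limiting function factors as
`√γ j m + ω(m) = m (√γ j + √(γ + 1/(1+m²)))`, and for `j ≥ -1`, `|m| ≤ M` the second factor is at least
`√(γ + 1/(1+M²)) - √γ > 0`.
-/

open Real

noncomputable def dispersion (γ k : ℝ) : ℝ := k * √(γ + 1 / (1 + k ^ 2))

lemma sqrt_add_sub_sqrt_le {γ ε : ℝ} (hγ : 0 < γ) (hε : 0 ≤ ε) :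
    √(γ + ε) - √γ ≤ ε / (2 * √γ) := by
  have hs : √γ ≤ √(γ + ε) := sqrt_le_sqrt (by linarith)
  have hsq : √(γ + ε) ^ 2 - √γ ^ 2 = ε := by
    rw [sq_sqrt (by linarith), sq_sqrt hγ.le]; ring
  rw [le_div_iff₀ (by positivity)]
  nlinarith

lemma abs_dispersion_sub_le {γ : ℝ} (hγ : 0 < γ) (k : ℝ) :
    |dispersion γ k - √γ * k| ≤ 1 / (2 * √γ * |k|) := by
  rcases eq_or_ne k 0 with rfl | hk
  · simp [dispersion]
  have hk0 : 0 < |k| := abs_pos.mpr hk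
  have hε : 0 ≤ 1 / (1 + k ^ 2) := by positivity
  have hmono : √γ ≤ √(γ + 1 / (1 + k ^ 2)) := sqrt_le_sqrt (by linarith)
  calc |dispersion γ k - √γ * k|
      = |k| * (√(γ + 1 / (1 + k ^ 2)) - √γ) := by
        rw [dispersion, mul_comm √γ, ← mul_sub, abs_mul, abs_of_nonneg (sub_nonneg.mpr hmono)]
    _ ≤ |k| * (1 / (1 + k ^ 2) / (2 * √γ)) := by gcongr; exact sqrt_add_sub_sqrt_le hγ hε
    _ ≤ 1 / (2 * √γ * |k|) := by
        rw [div_div, mul_one_div, div_le_div_iff₀ (by positivity) (by positivity)]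
        nlinarith [sqrt_pos.mpr hγ, sq_abs k]

lemma abs_abs_sub_abs_sqrt_mul_add_dispersion_le {γ j k ℓ : ℝ} (hγ : 0 < γ) (hj : |j| ≤ 1)
    (hk : k ≠ 0) (hkℓ : |k| ≤ 2 * |ℓ|) :
    |(|j * (dispersion γ k - dispersion γ ℓ) + dispersion γ (k - ℓ)| -
        |√γ * j * (k - ℓ) + dispersion γ (k - ℓ)|)| ≤ 3 / (2 * √γ) / |k| := by
  have hk0 : 0 < |k| := abs_pos.mpr hk
  have hg0 : 0 < √γ := sqrt_pos.mpr hγ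
  have hℓ : 1 / (2 * √γ * |ℓ|) ≤ 1 / (√γ * |k|) :=
    one_div_le_one_div_of_le (by positivity) (by nlinarith)
  calc _ ≤ |j * (dispersion γ k - dispersion γ ℓ) + dispersion γ (k - ℓ) -
          (√γ * j * (k - ℓ) + dispersion γ (k - ℓ))| := abs_abs_sub_abs_le_abs_sub _ _
    _ = |j| * |(dispersion γ k - √γ * k) - (dispersion γ ℓ - √γ * ℓ)| := by
        rw [← abs_mul]; ring_nf
    _ ≤ 1 * (1 / (2 * √γ * |k|) + 1 / (2 * √γ * |ℓ|)) := by
        gcongr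
        exact (abs_sub _ _).trans
          (add_le_add (abs_dispersion_sub_le hγ k) (abs_dispersion_sub_le hγ ℓ))
    _ ≤ 3 / (2 * √γ) / |k| := by
        have h3 : 1 / (2 * √γ * |k|) + 1 / (√γ * |k|) = 3 / (2 * √γ) / |k| := by
          field_simp; ring
        linarith

lemma sqrt_mul_add_dispersion (γ j m : ℝ) :
    √γ * j * m + dispersion γ m = m * (√γ * j + √(γ + 1 / (1 + m ^ 2))) := by
  rw [dispersion]; ring

lemma mul_abs_le_abs_sqrt_mul_add_dispersion {γ j m M : ℝ} (hj : -1 ≤ j) (hm : |m| ≤ M) :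
    (√(γ + 1 / (1 + M ^ 2)) - √γ) * |m| ≤ |√γ * j * m + dispersion γ m| := by
  have hm2 : m ^ 2 ≤ M ^ 2 := by
    rw [← sq_abs m]
    exact pow_le_pow_left₀ (abs_nonneg m) hm 2
  have hM : √(γ + 1 / (1 + M ^ 2)) ≤ √(γ + 1 / (1 + m ^ 2)) := by gcongr
  have hfactor : √(γ + 1 / (1 + M ^ 2)) - √γ ≤ √γ * j + √(γ + 1 / (1 + m ^ 2)) := by
    nlinarith [sqrt_nonneg γ]
  rw [sqrt_mul_add_dispersion, abs_mul, mul_comm]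
  exact mul_le_mul_of_nonneg_left (hfactor.trans (le_abs_self _)) (abs_nonneg m)

lemma sqrt_lt_sqrt_add_one_div {γ : ℝ} (hγ : 0 ≤ γ) (M : ℝ) : √γ < √(γ + 1 / (1 + M ^ 2)) :=
  sqrt_lt_sqrt hγ (by simp only [lt_add_iff_pos_right]; positivity)

lemma eq_zero_of_sqrt_mul_add_dispersion_eq_zero {γ j m : ℝ} (hγ : 0 ≤ γ) (hj : -1 ≤ j)
    (h : √γ * j * m + dispersion γ m = 0) : m = 0 := by
  have hbound := mul_abs_le_abs_sqrt_mul_add_dispersion (γ := γ) (M := |m|) hj le_rfl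
  rw [h, abs_zero] at hbound
  exact abs_nonpos_iff.mp
    (nonpos_of_mul_nonpos_right hbound (sub_pos.mpr (sqrt_lt_sqrt_add_one_div hγ |m|)))

/-- Asymptotics of the denominator of the kernel `n^{1,1,1}_{j,l,j}`:
for `γ > 1`, `ω(k) = k·√(γ + 1/(1+k²))` and `j ∈ {−1,1}`:
(1) for every `M > 0` there is `C > 0` such that for `|k−ℓ| ≤ M`,
`|k| ≥ 2M+1`, the quantity `|j(ω(k)−ω(ℓ)) + ω(k−ℓ)|` differs from
`|√γ·j·(k−ℓ) + ω(k−ℓ)|` by at most `C·|k|⁻¹`;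
(2) `√γ·j·m + ω(m) = 0` only at `m = 0`; and
(3) `|√γ·j·m + ω(m)| ≥ c·|m|` for `|m| ≤ M`, with `c > 0`. -/
theorem stmt18 (γ : ℝ) (hγ : 1 < γ) (j : ℝ) (hj : j = -1 ∨ j = 1) :
    (∀ M > (0:ℝ), ∃ C > (0:ℝ), ∀ k ℓ : ℝ, |k - ℓ| ≤ M → 2 * M + 1 ≤ |k| →
      abs (|j * (k * Real.sqrt (γ + 1 / (1 + k ^ 2)) -
              ℓ * Real.sqrt (γ + 1 / (1 + ℓ ^ 2))) +
          (k - ℓ) * Real.sqrt (γ + 1 / (1 + (k - ℓ) ^ 2))| -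
        |Real.sqrt γ * j * (k - ℓ) +
          (k - ℓ) * Real.sqrt (γ + 1 / (1 + (k - ℓ) ^ 2))|) ≤ C / |k|) ∧
    (∀ m : ℝ,
      Real.sqrt γ * j * m + m * Real.sqrt (γ + 1 / (1 + m ^ 2)) = 0 → m = 0) ∧
    (∀ M > (0:ℝ), ∃ c > (0:ℝ), ∀ m : ℝ, |m| ≤ M →
      c * |m| ≤ |Real.sqrt γ * j * m + m * Real.sqrt (γ + 1 / (1 + m ^ 2))|) := by
  have hγ0 : 0 < γ := by linarith
  have hj_abs : |j| ≤ 1 := by rcases hj with rfl | rfl <;> simp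
  have hj_ge : -1 ≤ j := by rcases hj with rfl | rfl <;> norm_num
  refine ⟨fun M _ => ?_, fun m => eq_zero_of_sqrt_mul_add_dispersion_eq_zero hγ0.le hj_ge,
    fun M _ => ?_⟩
  · refine ⟨3 / (2 * √γ), by positivity, fun k ℓ hkℓ hk => ?_⟩
    have hkℓ' : |k| ≤ 2 * |ℓ| := by linarith [abs_sub_abs_le_abs_sub k ℓ]
    exact abs_abs_sub_abs_sqrt_mul_add_dispersion_le hγ0 hj_abs (abs_pos.mp (by linarith)) hkℓ'
  · exact ⟨_, sub_pos.mpr (sqrt_lt_sqrt_add_one_div hγ0.le M),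
      fun m hm => mul_abs_le_abs_sqrt_mul_add_dispersion hj_ge hm⟩
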